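/- Let Φ: ℝ^p ⇉ ℝ^q be a polyhedral sublinear set-valued mapping whose domain dom(Φ) is a linear subspace of ℝ^p. Then the Hoffman constant of Φ is bounded above by the Hoffman constant of its upper adjoint: H(Φ) ≤ H(Φ*). -/

import Mathlib

/-!
The graph of `Φ` is a polyhedral cone `{(u, v) | A u + B v ≤ 0}`, so by Farkas' lemma
`Φ* w = {Aᵀ l | l ≥ 0, Bᵀ l = -w}`, and Hoffman's lemma for this conic system shows that the
Hoffman ratios of `Φ*` are bounded. This matters: `hoffmanConst` is an `sSup` in `ℝ`, which would
be `0` for an unbounded set.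

Let `x ∈ dom Φ` with `‖y‖ ≥ γ > 0` on `Φ x`. Separating the convex set `Φ x` from the open
`γ`-ball gives `w` with `‖w‖* ≤ 1` and `⟪w, ·⟫ ≥ γ` on `Φ x`. By LP duality some `z₀ ∈ Φ* w`
attains `μ = max ⟪Φ* w, x⟫ = min ⟪w, Φ x⟫ ≥ γ`; then `2 z₀ ∈ Φ* (2 w) \ Φ* w`, at `‖·‖*`-distance
at least `μ / ‖x‖` from `Φ* w`, while `w` is at distance at most `‖w‖* ≤ 1` from `Φ*⁻¹ (2 z₀)`.
Hence `γ ≤ H(Φ*) ‖x‖`, i.e. `‖Φ‖ ≤ H(Φ*)`.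

Finally, if `dom Φ` is a subspace and `v ∈ Φ u'`, then `u - u' ∈ dom Φ` and
`v + Φ (u - u') ⊆ Φ u`, so `dist (v, Φ u) ≤ H(Φ*) ‖u - u'‖`.
-/

open Matrix Set

noncomputable section

/-- A norm on `Fin n → ℝ`, given as a function with the norm axioms. -/
structure IsNorm {n : ℕ} (ν : (Fin n → ℝ) → ℝ) : Prop where
  nonneg : ∀ x, 0 ≤ ν x
  eq_zero_iff : ∀ x, ν x = 0 ↔ x = 0
  smul : ∀ (a : ℝ) (x : Fin n → ℝ), ν (a • x) = |a| * ν x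
  triangle : ∀ x y, ν (x + y) ≤ ν x + ν y

/-- The dual norm of `ν`, with respect to the standard dot-product pairing. -/
def dualNorm {n : ℕ} (ν : (Fin n → ℝ) → ℝ) (z : Fin n → ℝ) : ℝ :=
  sSup {r | ∃ x, ν x ≤ 1 ∧ r = z ⬝ᵥ x}

/-- Point-to-set distance induced by the norm `ν`. -/
def distWith {n : ℕ} (ν : (Fin n → ℝ) → ℝ) (x : Fin n → ℝ) (S : Set (Fin n → ℝ)) : ℝ :=
  sInf ((fun s => ν (x - s)) '' S)

/-- The graph of a set-valued mapping. -/
def graphOf {p q : ℕ} (Φ : (Fin p → ℝ) → Set (Fin q → ℝ)) :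
    Set ((Fin p → ℝ) × (Fin q → ℝ)) := {z | z.2 ∈ Φ z.1}

/-- The domain of a set-valued mapping. -/
def domOf {p q : ℕ} (Φ : (Fin p → ℝ) → Set (Fin q → ℝ)) : Set (Fin p → ℝ) :=
  {u | (Φ u).Nonempty}

/-- The image of a set-valued mapping. -/
def imOf {p q : ℕ} (Φ : (Fin p → ℝ) → Set (Fin q → ℝ)) : Set (Fin q → ℝ) :=
  ⋃ u, Φ u

/-- The inverse of a set-valued mapping. -/
def invOf {p q : ℕ} (Φ : (Fin p → ℝ) → Set (Fin q → ℝ)) : (Fin q → ℝ) → Set (Fin p → ℝ) :=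
  fun v => {u | v ∈ Φ u}

/-- A polyhedron: an intersection of finitely many closed half-spaces. -/
def IsPolyhedron {E : Type*} [AddCommGroup E] [Module ℝ E] (S : Set E) : Prop :=
  ∃ (k : ℕ) (f : Fin k → E →ₗ[ℝ] ℝ) (c : Fin k → ℝ), S = {x | ∀ i, f i x ≤ c i}

/-- A set-valued mapping is polyhedral if its graph is a polyhedron. -/
def IsPolyhedralMapping {p q : ℕ} (Φ : (Fin p → ℝ) → Set (Fin q → ℝ)) : Prop :=
  IsPolyhedron (graphOf Φ)

/-- A set-valued mapping is sublinear if its graph is a convex cone containing the origin. -/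
def IsSublinearMapping {p q : ℕ} (Φ : (Fin p → ℝ) → Set (Fin q → ℝ)) : Prop :=
  (0 : Fin q → ℝ) ∈ Φ 0 ∧ Convex ℝ (graphOf Φ) ∧
    ∀ (t : ℝ), 0 ≤ t → ∀ z ∈ graphOf Φ, t • z ∈ graphOf Φ

/-- The Hoffman constant of a set-valued mapping, with respect to the norms `νp, νq`. -/
def hoffmanConst {p q : ℕ} (νp : (Fin p → ℝ) → ℝ) (νq : (Fin q → ℝ) → ℝ)
    (Φ : (Fin p → ℝ) → Set (Fin q → ℝ)) : ℝ :=
  sSup {r | ∃ u v, u ∈ domOf Φ ∧ v ∈ imOf Φ ∧ v ∉ Φ u ∧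
    r = distWith νq v (Φ u) / distWith νp u (invOf Φ v)}

/-- The norm of a sublinear set-valued mapping, with respect to the norms `νp, νq`. -/
def svmNorm {p q : ℕ} (νp : (Fin p → ℝ) → ℝ) (νq : (Fin q → ℝ) → ℝ)
    (Φ : (Fin p → ℝ) → Set (Fin q → ℝ)) : ℝ :=
  sSup {r | ∃ u, u ∈ domOf Φ ∧ νp u ≤ 1 ∧ r = sInf (νq '' Φ u)}

/-- The tangent cone to a set `G` at a point `g ∈ G`. -/
def polyTangentCone {E : Type*} [AddCommGroup E] [Module ℝ E] (G : Set E) (g : E) : Set E :=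
  {d | ∃ t : ℝ, 0 < t ∧ g + t • d ∈ G}

/-- The collection of tangent cones to the graph of `Φ`. -/
def tangentCones {p q : ℕ} (Φ : (Fin p → ℝ) → Set (Fin q → ℝ)) :
    Set (Set ((Fin p → ℝ) × (Fin q → ℝ))) :=
  {T | ∃ u v, v ∈ Φ u ∧ T = polyTangentCone (graphOf Φ) (u, v)}

/-- The set-valued mapping whose graph is `T`. -/
def mapOfGraph {p q : ℕ} (T : Set ((Fin p → ℝ) × (Fin q → ℝ))) :
    (Fin p → ℝ) → Set (Fin q → ℝ) := fun w => {z | (w, z) ∈ T}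

/-- A subset is a linear subspace if it is the underlying set of a submodule. -/
def IsLinearSubspace {E : Type*} [AddCommGroup E] [Module ℝ E] (S : Set E) : Prop :=
  ∃ W : Submodule ℝ E, S = ↑W

/-- The upper adjoint of a sublinear mapping. -/
def upperAdjoint {p q : ℕ} (Φ : (Fin p → ℝ) → Set (Fin q → ℝ)) :
    (Fin q → ℝ) → Set (Fin p → ℝ) :=
  fun w => {z | ∀ u v, v ∈ Φ u → z ⬝ᵥ u ≤ w ⬝ᵥ v}

/-- The solution mapping `b ↦ {x ∈ R : Ax - b ∈ S}`. -/
def solMap {m n : ℕ} (A : Matrix (Fin m) (Fin n) ℝ) (R : Set (Fin n → ℝ))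
    (S : Set (Fin m → ℝ)) : (Fin m → ℝ) → Set (Fin n → ℝ) :=
  fun b => {x | x ∈ R ∧ A *ᵥ x - b ∈ S}

/-- The dual cone `{z : ⟨z,x⟩ ≥ 0 for all x ∈ C}`. -/
def dualConeOf {n : ℕ} (C : Set (Fin n → ℝ)) : Set (Fin n → ℝ) :=
  {z | ∀ x ∈ C, 0 ≤ z ⬝ᵥ x}

/-- A polyhedral cone. -/
def IsPolyhedralCone {n : ℕ} (C : Set (Fin n → ℝ)) : Prop :=
  IsPolyhedron C ∧ (0 : Fin n → ℝ) ∈ C ∧ ∀ (t : ℝ), 0 ≤ t → ∀ x ∈ C, t • x ∈ C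

/-- The dual solution mapping `c ↦ {y ∈ S* : c - Aᵀy ∈ R*}`. -/
def dualSolMap {m n : ℕ} (A : Matrix (Fin m) (Fin n) ℝ) (R : Set (Fin n → ℝ))
    (S : Set (Fin m → ℝ)) : (Fin n → ℝ) → Set (Fin m → ℝ) :=
  fun c => {y | y ∈ dualConeOf S ∧ c - Aᵀ *ᵥ y ∈ dualConeOf R}

/-- The box `{x : ℓ ≤ x ≤ u}`. -/
def boxSet {n : ℕ} (ℓ u : Fin n → ℝ) : Set (Fin n → ℝ) :=
  {x | ∀ i, ℓ i ≤ x i ∧ x i ≤ u i}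

/-- The nonnegative orthant of `ℝ^n`. -/
def nonnegOrthant (n : ℕ) : Set (Fin n → ℝ) := {x | ∀ i, 0 ≤ x i}

/-- The Euclidean norm on `Fin n → ℝ`. -/
def euclNorm {n : ℕ} (x : Fin n → ℝ) : ℝ := Real.sqrt (∑ i, x i ^ 2)

/-- The operator norm induced by the Euclidean norms. -/
def opNorm2 {m n : ℕ} (M : Matrix (Fin m) (Fin n) ℝ) : ℝ :=
  sSup {r | ∃ x, euclNorm x ≤ 1 ∧ r = euclNorm (M *ᵥ x)}

/-- The chi condition measure `χ(A) = sup_{D} ‖(ADAᵀ)⁻¹AD‖₂`. -/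
def chiMeasure {m n : ℕ} (A : Matrix (Fin m) (Fin n) ℝ) : ℝ :=
  sSup {r | ∃ d : Fin n → ℝ, (∀ i, 0 < d i) ∧
    r = opNorm2 ((A * Matrix.diagonal d * Aᵀ)⁻¹ * (A * Matrix.diagonal d))}

/-- The chi-bar condition measure `χ̄(A) = sup_{D} ‖Aᵀ(ADAᵀ)⁻¹AD‖₂`. -/
def chiBarMeasure {m n : ℕ} (A : Matrix (Fin m) (Fin n) ℝ) : ℝ :=
  sSup {r | ∃ d : Fin n → ℝ, (∀ i, 0 < d i) ∧
    r = opNorm2 (Aᵀ * (A * Matrix.diagonal d * Aᵀ)⁻¹ * (A * Matrix.diagonal d))}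

/-- The orthogonal complement (w.r.t. the dot product) of a set. -/
def perpOf {m : ℕ} (L : Set (Fin m → ℝ)) : Set (Fin m → ℝ) :=
  {y | ∀ s ∈ L, y ⬝ᵥ s = 0}

/-- The mapping `P_A : b ↦ {x ≥ 0 : Ax = b}`. -/
def PA {m n : ℕ} (A : Matrix (Fin m) (Fin n) ℝ) : (Fin m → ℝ) → Set (Fin n → ℝ) :=
  fun b => {x | (∀ i, 0 ≤ x i) ∧ A *ᵥ x = b}

/-- The mapping `P_A* : c ↦ {y : Aᵀy ≤ c}`. -/
def PAstar {m n : ℕ} (A : Matrix (Fin m) (Fin n) ℝ) : (Fin n → ℝ) → Set (Fin m → ℝ) :=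
  fun c => {y | ∀ i, (Aᵀ *ᵥ y) i ≤ c i}

/-- Signature vectors: entries equal to `1` or `-1`. -/
def IsSignVector {n : ℕ} (d : Fin n → ℝ) : Prop := ∀ i, d i = 1 ∨ d i = -1

end

theorem dotProductEquiv_symm_dotProduct {n : Type*} [Fintype n] [DecidableEq n]
    (f : (n → ℝ) →ₗ[ℝ] ℝ) (x : n → ℝ) : (dotProductEquiv ℝ n).symm f ⬝ᵥ x = f x := by
  conv_rhs => rw [← (dotProductEquiv ℝ n).apply_symm_apply f]
  rfl

theorem dotProduct_le_sum_abs_mul_norm {n : ℕ} (z x : Fin n → ℝ) :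
    z ⬝ᵥ x ≤ (∑ i, |z i|) * ‖x‖ := by
  rw [Finset.sum_mul]
  refine Finset.sum_le_sum fun i _ => (le_abs_self _).trans ?_
  rw [abs_mul, ← Real.norm_eq_abs (x i)]
  exact mul_le_mul_of_nonneg_left (norm_le_pi_norm x i) (abs_nonneg _)

theorem dualNorm_le_of_forall {n : ℕ} {ν : (Fin n → ℝ) → ℝ} {z : Fin n → ℝ} {c : ℝ}
    (h : ∀ x, ν x ≤ 1 → z ⬝ᵥ x ≤ c) (hc : 0 ≤ c) : dualNorm ν z ≤ c :=
  Real.sSup_le (by rintro _ ⟨x, hx, rfl⟩; exact h x hx) hc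

namespace IsNorm

variable {n : ℕ} {ν : (Fin n → ℝ) → ℝ}

theorem map_zero (h : IsNorm ν) : ν 0 = 0 := (h.eq_zero_iff 0).2 rfl

theorem pos (h : IsNorm ν) {x : Fin n → ℝ} (hx : x ≠ 0) : 0 < ν x :=
  (h.nonneg x).lt_of_ne' fun e => hx ((h.eq_zero_iff x).1 e)

theorem map_neg (h : IsNorm ν) (x : Fin n → ℝ) : ν (-x) = ν x := by
  simpa using h.smul (-1) x

theorem map_inv_smul_self (h : IsNorm ν) {x : Fin n → ℝ} (hx : x ≠ 0) : ν ((ν x)⁻¹ • x) = 1 := by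
  rw [h.smul, abs_inv, abs_of_nonneg (h.nonneg x), inv_mul_cancel₀ (h.pos hx).ne']

theorem map_sum_le (h : IsNorm ν) {ι : Type*} (s : Finset ι) (f : ι → Fin n → ℝ) :
    ν (∑ i ∈ s, f i) ≤ ∑ i ∈ s, ν (f i) :=
  Finset.le_sum_of_subadditive ν h.map_zero.le h.triangle s f

theorem exists_le_mul_norm (h : IsNorm ν) : ∃ C, 0 ≤ C ∧ ∀ x, ν x ≤ C * ‖x‖ := by
  classical
  set e : Fin n → Fin n → ℝ := fun i j => if i = j then 1 else 0
  refine ⟨∑ i, ν (e i), Finset.sum_nonneg fun i _ => h.nonneg _, fun x => ?_⟩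
  calc ν x = ν (∑ i, x i • e i) := by rw [← pi_eq_sum_univ x]
    _ ≤ ∑ i, ‖x i‖ * ν (e i) := by
      simpa only [h.smul, Real.norm_eq_abs] using h.map_sum_le Finset.univ fun i => x i • e i
    _ ≤ ∑ i, ‖x‖ * ν (e i) := by gcongr with i; exacts [h.nonneg _, norm_le_pi_norm x i]
    _ = (∑ i, ν (e i)) * ‖x‖ := by rw [← Finset.mul_sum, mul_comm]

theorem continuous (h : IsNorm ν) : Continuous ν := by
  obtain ⟨C, hC, hle⟩ := h.exists_le_mul_norm
  refine (LipschitzWith.of_le_add_mul C.toNNReal fun x y => ?_).continuous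
  calc ν x = ν (y + (x - y)) := by rw [add_sub_cancel]
    _ ≤ ν y + C * ‖x - y‖ := (h.triangle _ _).trans (by gcongr; exact hle _)
    _ = ν y + C.toNNReal * dist x y := by rw [Real.coe_toNNReal C hC, dist_eq_norm]

theorem exists_norm_le_mul (h : IsNorm ν) : ∃ c, 0 < c ∧ ∀ x, ‖x‖ ≤ c * ν x := by
  by_cases hS : (Metric.sphere (0 : Fin n → ℝ) 1).Nonempty
  · obtain ⟨x₀, hx₀, hmin⟩ :=
      (isCompact_sphere (0 : Fin n → ℝ) 1).exists_isMinOn hS h.continuous.continuousOn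
    have hx₀pos : 0 < ν x₀ := h.pos (ne_zero_of_mem_unit_sphere ⟨x₀, hx₀⟩)
    refine ⟨(ν x₀)⁻¹, inv_pos.2 hx₀pos, fun x => ?_⟩
    rcases eq_or_ne x 0 with rfl | hx
    · simp [h.map_zero]
    have hxpos : 0 < ‖x‖ := norm_pos_iff.2 hx
    have hmem : ‖x‖⁻¹ • x ∈ Metric.sphere (0 : Fin n → ℝ) 1 := by
      simp [norm_smul, hxpos.ne']
    have hle : ν x₀ ≤ ‖x‖⁻¹ * ν x := by
      simpa [h.smul, abs_of_pos hxpos] using hmin hmem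
    rw [inv_mul_eq_div, le_div_iff₀ hxpos] at hle
    rwa [inv_mul_eq_div, le_div_iff₀ hx₀pos, mul_comm]
  · refine ⟨1, one_pos, fun x => ?_⟩
    rcases eq_or_ne x 0 with rfl | hx
    · simp [h.map_zero]
    exact absurd ⟨‖x‖⁻¹ • x, by simp [norm_smul, norm_ne_zero_iff.2 hx]⟩ hS

theorem bddAbove_dotProduct (h : IsNorm ν) (z : Fin n → ℝ) :
    BddAbove {r | ∃ x, ν x ≤ 1 ∧ r = z ⬝ᵥ x} := by
  obtain ⟨c, hc, hle⟩ := h.exists_norm_le_mul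
  refine ⟨(∑ i, |z i|) * c, ?_⟩
  rintro _ ⟨x, hx, rfl⟩
  refine (dotProduct_le_sum_abs_mul_norm z x).trans ?_
  refine mul_le_mul_of_nonneg_left ?_ (Finset.sum_nonneg fun i _ => abs_nonneg _)
  simpa using (hle x).trans (mul_le_mul_of_nonneg_left hx hc.le)

theorem dotProduct_le_dualNorm (h : IsNorm ν) (z : Fin n → ℝ) {x : Fin n → ℝ} (hx : ν x ≤ 1) :
    z ⬝ᵥ x ≤ dualNorm ν z :=
  le_csSup (h.bddAbove_dotProduct z) ⟨x, hx, rfl⟩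

theorem dualNorm_nonneg (h : IsNorm ν) (z : Fin n → ℝ) : 0 ≤ dualNorm ν z := by
  simpa using h.dotProduct_le_dualNorm z (x := 0) (by simp [h.map_zero])

theorem dotProduct_le_dualNorm_mul (h : IsNorm ν) (z x : Fin n → ℝ) :
    z ⬝ᵥ x ≤ dualNorm ν z * ν x := by
  rcases eq_or_ne x 0 with rfl | hx
  · simp [h.map_zero]
  have hle := h.dotProduct_le_dualNorm z (h.map_inv_smul_self hx).le
  rw [dotProduct_smul, smul_eq_mul, inv_mul_le_iff₀ (h.pos hx), mul_comm] at hle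
  exact hle

theorem dualNorm_smul_le (h : IsNorm ν) (a : ℝ) (z : Fin n → ℝ) :
    dualNorm ν (a • z) ≤ |a| * dualNorm ν z :=
  dualNorm_le_of_forall (fun x hx => by
    calc a • z ⬝ᵥ x = z ⬝ᵥ (a • x) := by rw [smul_dotProduct, dotProduct_smul]
      _ ≤ dualNorm ν z * (|a| * ν x) := by rw [← h.smul]; exact h.dotProduct_le_dualNorm_mul _ _
      _ ≤ dualNorm ν z * (|a| * 1) := by gcongr; exact h.dualNorm_nonneg z
      _ = |a| * dualNorm ν z := by ring)
    (mul_nonneg (abs_nonneg a) (h.dualNorm_nonneg z))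

theorem dual (h : IsNorm ν) : IsNorm (dualNorm ν) where
  nonneg := h.dualNorm_nonneg
  eq_zero_iff z := by
    refine ⟨fun hz => dotProduct_self_eq_zero.1 (le_antisymm ?_ ?_), fun hz => ?_⟩
    · simpa [hz] using h.dotProduct_le_dualNorm_mul z z
    · exact dotProduct_self_star_nonneg z
    · exact le_antisymm (by simpa [hz] using h.dualNorm_smul_le 0 z) (h.dualNorm_nonneg _)
  smul a z := by
    refine le_antisymm (h.dualNorm_smul_le a z) ?_
    rcases eq_or_ne a 0 with rfl | ha
    · simp [h.dualNorm_nonneg]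
    have := h.dualNorm_smul_le a⁻¹ (a • z)
    rwa [inv_smul_smul₀ ha, abs_inv, ← div_eq_inv_mul, le_div_iff₀ (abs_pos.2 ha),
      mul_comm] at this
  triangle x y := dualNorm_le_of_forall (fun v hv => by
      rw [add_dotProduct]
      exact add_le_add (h.dotProduct_le_dualNorm x hv) (h.dotProduct_le_dualNorm y hv))
    (add_nonneg (h.dualNorm_nonneg x) (h.dualNorm_nonneg y))

theorem exists_mulVec_le {k : ℕ} (h : IsNorm ν) (M : Matrix (Fin n) (Fin k) ℝ) :
    ∃ C, 0 ≤ C ∧ ∀ x, ν (M *ᵥ x) ≤ C * ‖x‖ := by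
  obtain ⟨C, hC, hle⟩ := h.exists_le_mul_norm
  let f := LinearMap.toContinuousLinearMap M.mulVecLin
  refine ⟨C * ‖f‖, by positivity, fun x => (hle _).trans ?_⟩
  rw [mul_assoc]
  exact mul_le_mul_of_nonneg_left (f.le_opNorm x) hC

theorem convexOn (h : IsNorm ν) : ConvexOn ℝ Set.univ ν :=
  ⟨convex_univ, fun x _ y _ a b ha hb _ => by
    simpa [h.smul, abs_of_nonneg ha, abs_of_nonneg hb] using h.triangle (a • x) (b • y)⟩

/-- Hahn–Banach separation of `S` from the open `ν`-ball of radius `γ`. -/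
theorem exists_dualNorm_le_one (h : IsNorm ν) {S : Set (Fin n → ℝ)} (hS : Convex ℝ S) {γ : ℝ}
    (hγ : 0 < γ) (hSγ : ∀ y ∈ S, γ ≤ ν y) :
    ∃ w, dualNorm ν w ≤ 1 ∧ ∀ y ∈ S, γ ≤ w ⬝ᵥ y := by
  have hU : Convex ℝ {y | ν y < γ} := by simpa using h.convexOn.convex_lt γ
  obtain ⟨f, u, hfU, hfS⟩ := geometric_hahn_banach_open hU (isOpen_lt h.continuous continuous_const)
    hS (Set.disjoint_left.2 fun y hyU hyS => (hSγ y hyS).not_gt hyU)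
  have hu : 0 < u := by simpa using hfU 0 (by simpa [h.map_zero] using hγ)
  have hs := dotProductEquiv_symm_dotProduct (f : (Fin n → ℝ) →ₗ[ℝ] ℝ)
  simp only [ContinuousLinearMap.coe_coe] at hs
  refine ⟨(γ / u) • (dotProductEquiv ℝ _).symm f,
    dualNorm_le_of_forall (fun y hy => ?_) zero_le_one, fun y hy => ?_⟩
  · rw [smul_dotProduct, hs, smul_eq_mul, div_mul_eq_mul_div, div_le_one hu]
    by_contra! hlt
    have hfy : 0 < f y := by nlinarith
    have := hfU ((u / f y) • y) (by
      rw [Set.mem_ofPred_eq, h.smul, abs_of_pos (div_pos hu hfy)]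
      calc u / f y * ν y ≤ u / f y := mul_le_of_le_one_right (div_pos hu hfy).le hy
        _ < γ := by rw [div_lt_iff₀ hfy]; linarith)
    rw [map_smul, smul_eq_mul, div_mul_cancel₀ _ hfy.ne'] at this
    exact lt_irrefl _ this
  · rw [smul_dotProduct, hs, smul_eq_mul, div_mul_eq_mul_div, le_div_iff₀ hu]
    exact mul_le_mul_of_nonneg_left (hfS y hy) hγ.le

end IsNorm

section DistWith

variable {n : ℕ} {ν : (Fin n → ℝ) → ℝ} {x : Fin n → ℝ} {S : Set (Fin n → ℝ)}

theorem distWith_nonneg (hν : IsNorm ν) (x : Fin n → ℝ) (S : Set (Fin n → ℝ)) :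
    0 ≤ distWith ν x S :=
  Real.sInf_nonneg (by rintro _ ⟨s, -, rfl⟩; exact hν.nonneg _)

theorem distWith_le (hν : IsNorm ν) {s : Fin n → ℝ} (hs : s ∈ S) : distWith ν x S ≤ ν (x - s) :=
  csInf_le ⟨0, by rintro _ ⟨s, -, rfl⟩; exact hν.nonneg _⟩ ⟨s, hs, rfl⟩

theorem le_distWith {c : ℝ} (hS : S.Nonempty) (h : ∀ s ∈ S, c ≤ ν (x - s)) :
    c ≤ distWith ν x S :=
  le_csInf (hS.image _) (by rintro _ ⟨s, hs, rfl⟩; exact h s hs)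

theorem le_mul_distWith {a c : ℝ} (hS : S.Nonempty) (hc : 0 ≤ c)
    (h : ∀ s ∈ S, a ≤ c * ν (x - s)) : a ≤ c * distWith ν x S := by
  rcases hc.eq_or_lt with rfl | hc
  · obtain ⟨s, hs⟩ := hS
    simpa using h s hs
  rw [← div_le_iff₀' hc]
  exact le_distWith hS fun s hs => (div_le_iff₀' hc).2 (h s hs)

theorem distWith_pos (hν : IsNorm ν) (hS : IsClosed S) (hne : S.Nonempty) (hx : x ∉ S) :
    0 < distWith ν x S := by
  obtain ⟨c, hc, hle⟩ := hν.exists_norm_le_mul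
  obtain ⟨ε, hε, hball⟩ := Metric.isOpen_iff.1 hS.isOpen_compl x hx
  refine (div_pos hε hc).trans_le (le_distWith hne fun s hs => ?_)
  rw [div_le_iff₀' hc]
  refine le_trans ?_ (hle _)
  rw [← dist_eq_norm]
  by_contra! hlt
  exact hball (Metric.mem_ball.2 (by rwa [dist_comm])) hs

end DistWith

section HoffmanConst

variable {p q : ℕ} {νp : (Fin p → ℝ) → ℝ} {νq : (Fin q → ℝ) → ℝ}
  {Φ : (Fin p → ℝ) → Set (Fin q → ℝ)} {c : ℝ}

def IsHoffmanBound (νp : (Fin p → ℝ) → ℝ) (νq : (Fin q → ℝ) → ℝ)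
    (Φ : (Fin p → ℝ) → Set (Fin q → ℝ)) (c : ℝ) : Prop :=
  ∀ u v, u ∈ domOf Φ → v ∈ imOf Φ → distWith νq v (Φ u) ≤ c * distWith νp u (invOf Φ v)

theorem hoffmanConst_nonneg (hνp : IsNorm νp) (hνq : IsNorm νq) : 0 ≤ hoffmanConst νp νq Φ :=
  Real.sSup_nonneg (by
    rintro _ ⟨u, v, -, -, -, rfl⟩
    exact div_nonneg (distWith_nonneg hνq _ _) (distWith_nonneg hνp _ _))

theorem hoffmanConst_le (hνp : IsNorm νp) (hc : 0 ≤ c) (h : IsHoffmanBound νp νq Φ c) :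
    hoffmanConst νp νq Φ ≤ c :=
  Real.sSup_le (by
    rintro _ ⟨u, v, hu, hv, -, rfl⟩
    exact div_le_of_le_mul₀ (distWith_nonneg hνp _ _) hc (h u v hu hv)) hc

theorem div_le_hoffmanConst (hνp : IsNorm νp) (hc : 0 ≤ c) (h : IsHoffmanBound νp νq Φ c)
    {u : Fin p → ℝ} {v : Fin q → ℝ} (hu : u ∈ domOf Φ) (hv : v ∈ imOf Φ) (hvu : v ∉ Φ u) :
    distWith νq v (Φ u) / distWith νp u (invOf Φ v) ≤ hoffmanConst νp νq Φ := by
  refine le_csSup ⟨c, ?_⟩ ⟨u, v, hu, hv, hvu, rfl⟩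
  rintro _ ⟨u, v, hu, hv, -, rfl⟩
  exact div_le_of_le_mul₀ (distWith_nonneg hνp _ _) hc (h u v hu hv)

end HoffmanConst

section ConeSpan

open Function

variable {E : Type*} [AddCommGroup E] [Module ℝ E] {ι : Type*} [Fintype ι]

theorem linearIndepOn_iff_fun {g : ι → E} {s : Set ι} :
    LinearIndepOn ℝ g s ↔ ∀ l : ι → ℝ, support l ⊆ s → ∑ i, l i • g i = 0 → l = 0 := by
  rw [linearIndepOn_iff]
  refine (Finsupp.equivFunOnFinite (M := ℝ) (α := ι)).forall_congr fun l => ?_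
  simp [Finsupp.mem_supported, Finsupp.linearCombination_apply, Finsupp.sum_fintype,
    Finsupp.ext_iff, funext_iff, Set.subset_def]

def coneSpan (g : ι → E) : Set E := {x | ∃ l : ι → ℝ, 0 ≤ l ∧ ∑ i, l i • g i = x}

theorem mem_coneSpan_self [DecidableEq ι] (g : ι → E) (i : ι) : g i ∈ coneSpan g :=
  ⟨Pi.single i 1, Pi.single_nonneg.2 zero_le_one, by simp [Pi.single_apply]⟩

theorem smul_mem_coneSpan {g : ι → E} {x : E} (hx : x ∈ coneSpan g) {t : ℝ} (ht : 0 ≤ t) :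
    t • x ∈ coneSpan g := by
  obtain ⟨l, hl, rfl⟩ := hx
  exact ⟨t • l, smul_nonneg ht hl, by simp [Finset.smul_sum, smul_smul]⟩

theorem convex_coneSpan (g : ι → E) : Convex ℝ (coneSpan g) := by
  rintro _ ⟨l, hl, rfl⟩ _ ⟨m, hm, rfl⟩ a b ha hb -
  refine ⟨a • l + b • m, add_nonneg (smul_nonneg ha hl) (smul_nonneg hb hm), ?_⟩
  simp [add_smul, smul_smul, Finset.sum_add_distrib, Finset.smul_sum]

/-- The reduction step of Carathéodory's theorem: a linear dependence among the generators in
the support of `l` is subtracted from `l` until one coefficient vanishes. -/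
theorem exists_support_ssubset_of_not_linearIndepOn {g : ι → E} {l : ι → ℝ} (hl : 0 ≤ l)
    (hdep : ¬ LinearIndepOn ℝ g (support l)) :
    ∃ m : ι → ℝ, 0 ≤ m ∧ ∑ i, m i • g i = ∑ i, l i • g i ∧ support m ⊂ support l := by
  rw [linearIndepOn_iff_fun] at hdep
  push Not at hdep
  obtain ⟨f, hf_supp, hf_sum, hf_ne⟩ := hdep
  wlog hpos : ∃ i, 0 < f i generalizing f
  · push Not at hpos
    obtain ⟨i, hi⟩ := Function.ne_iff.1 hf_ne
    refine this (-f) (by rwa [support_neg]) (by simp [hf_sum]) (neg_ne_zero.2 hf_ne)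
      ⟨i, neg_pos.2 ((hpos i).lt_of_ne hi)⟩
  classical
  obtain ⟨i₀, hi₀, hmin⟩ := (Finset.univ.filter (0 < f ·)).exists_min_image (fun i => l i / f i)
    (by simpa [Finset.Nonempty] using hpos)
  replace hi₀ : 0 < f i₀ := (Finset.mem_filter.1 hi₀).2
  set t := l i₀ / f i₀
  have ht : 0 ≤ t := div_nonneg (hl i₀) hi₀.le
  have hfl : ∀ i, l i = 0 → f i = 0 := fun i hli => by
    by_contra hfi
    exact hf_supp hfi hli
  refine ⟨l - t • f, fun i => ?_, ?_, ?_⟩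
  · rcases lt_or_ge 0 (f i) with hfi | hfi
    · have := hmin i (Finset.mem_filter.2 ⟨Finset.mem_univ _, hfi⟩)
      rw [le_div_iff₀ hfi] at this
      simpa using this
    · simpa using add_nonneg (hl i) (mul_nonneg ht (neg_nonneg.2 hfi))
  · simp [sub_smul, mul_smul, Finset.sum_sub_distrib, ← Finset.smul_sum, hf_sum]
  · refine (Set.ssubset_iff_of_subset fun i hi => ?_).2 ⟨i₀, ?_, ?_⟩
    · rw [mem_support] at hi ⊢
      contrapose! hi
      simp [hi, hfl i hi]
    · exact fun h => hi₀.ne' (hfl i₀ h)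
    · simp [t, div_mul_cancel₀ _ hi₀.ne']

/-- Carathéodory's theorem for cones. -/
theorem exists_linearIndepOn_support (g : ι → E) {l : ι → ℝ} (hl : 0 ≤ l) :
    ∃ m : ι → ℝ, 0 ≤ m ∧ ∑ i, m i • g i = ∑ i, l i • g i ∧ support m ⊆ support l ∧
      LinearIndepOn ℝ g (support m) := by
  induction hk : (support l).ncard using Nat.strong_induction_on generalizing l with
  | _ k ih =>
    by_cases hind : LinearIndepOn ℝ g (support l)
    · exact ⟨l, hl, rfl, subset_rfl, hind⟩
    obtain ⟨m, hm, hsum, hss⟩ := exists_support_ssubset_of_not_linearIndepOn hl hind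
    obtain ⟨m', hm', hsum', hss', hind'⟩ := ih _ (hk ▸ Set.ncard_lt_ncard hss) hm rfl
    exact ⟨m', hm', hsum'.trans hsum, hss'.trans hss.subset, hind'⟩

end ConeSpan

section ConeSpanTopology

open Function

variable {ι : Type*} [Fintype ι]

def supportedFun (ι : Type*) (s : Set ι) : Submodule ℝ (ι → ℝ) where
  carrier := {l | support l ⊆ s}
  add_mem' ha hb := (support_add _ _).trans (Set.union_subset ha hb)
  zero_mem' := by simp
  smul_mem' c _ hl := (support_const_smul_subset c _).trans hl

variable {E : Type*} [AddCommGroup E] [Module ℝ E]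

def supportedCombination (g : ι → E) (s : Set ι) : supportedFun ι s →ₗ[ℝ] E :=
  (Fintype.linearCombination ℝ g).domRestrict (supportedFun ι s)

theorem supportedCombination_apply (g : ι → E) (s : Set ι) (l : supportedFun ι s) :
    supportedCombination g s l = ∑ i, (l : ι → ℝ) i • g i :=
  Fintype.linearCombination_apply ℝ g l

theorem ker_supportedCombination {g : ι → E} {s : Set ι} (h : LinearIndepOn ℝ g s) :
    LinearMap.ker (supportedCombination g s) = ⊥ := by
  refine LinearMap.ker_eq_bot'.2 fun l hl => Subtype.ext ?_
  rw [supportedCombination_apply] at hl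
  exact linearIndepOn_iff_fun.1 h l l.2 hl

/-- A finitely generated cone is the finite union of the cones spanned by linearly independent
subfamilies, each of which is closed. -/
theorem isClosed_coneSpan [TopologicalSpace E] [IsTopologicalAddGroup E] [ContinuousSMul ℝ E]
    [T2Space E] (g : ι → E) : IsClosed (coneSpan g) := by
  have hcover : coneSpan g = ⋃ s ∈ {s | LinearIndepOn ℝ g s},
      supportedCombination g s '' {l | 0 ≤ (l : ι → ℝ)} := by
    ext x
    simp only [Set.mem_iUnion, Set.mem_image, Set.mem_ofPred_eq, exists_prop]
    constructor
    · rintro ⟨l, hl, rfl⟩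
      obtain ⟨m, hm, hsum, -, hind⟩ := exists_linearIndepOn_support g hl
      exact ⟨support m, hind, ⟨m, fun _ h => h⟩, hm, by rw [supportedCombination_apply, hsum]⟩
    · rintro ⟨s, -, l, hl, rfl⟩
      exact ⟨l, hl, (supportedCombination_apply g s l).symm⟩
  rw [hcover]
  refine (Set.toFinite _).isClosed_biUnion fun s hs => ?_
  exact (LinearMap.isClosedEmbedding_of_injective (ker_supportedCombination hs)).isClosedMap _
    (isClosed_le continuous_const continuous_subtype_val)

theorem exists_norm_le_mul_norm_sum {F : Type*} [NormedAddCommGroup F] [NormedSpace ℝ F]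
    (g : ι → F) :
    ∃ C, 0 ≤ C ∧ ∀ l : ι → ℝ, LinearIndepOn ℝ g (support l) → ‖l‖ ≤ C * ‖∑ i, l i • g i‖ := by
  have hK : ∀ s : Set ι, ∃ K : NNReal,
      LinearIndepOn ℝ g s → AntilipschitzWith K (supportedCombination g s) := fun s => by
    by_cases hs : LinearIndepOn ℝ g s
    · obtain ⟨K, -, hK⟩ := (supportedCombination g s).exists_antilipschitzWith
        (ker_supportedCombination hs)
      exact ⟨K, fun _ => hK⟩
    · exact ⟨0, fun h => absurd h hs⟩
  choose K hK using hK
  obtain ⟨C, hC⟩ := (Set.finite_range K).bddAbove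
  refine ⟨C, C.2, fun l hl => ?_⟩
  have := (hK _ hl).le_mul_norm (map_zero _) ⟨l, fun _ h => h⟩
  rw [supportedCombination_apply] at this
  exact this.trans (mul_le_mul_of_nonneg_right (hC ⟨_, rfl⟩) (norm_nonneg _))

end ConeSpanTopology

section Farkas

variable {m n : Type*} [Fintype m] [Fintype n]

/-- **Farkas' lemma**, via separation from the closed cone `coneSpan g`. -/
theorem mem_coneSpan_of_forall_dotProduct_nonpos {g : m → n → ℝ} {d : n → ℝ}
    (h : ∀ y, (∀ i, g i ⬝ᵥ y ≤ 0) → d ⬝ᵥ y ≤ 0) : d ∈ coneSpan g := by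
  classical
  by_contra hd
  obtain ⟨f, u, hfu, hud⟩ :=
    geometric_hahn_banach_closed_point (convex_coneSpan g) (isClosed_coneSpan g) hd
  have hu : 0 < u := by simpa using hfu 0 ⟨0, le_rfl, by simp⟩
  have hf : ∀ x ∈ coneSpan g, f x ≤ 0 := fun x hx => by
    by_contra! hpos
    have := hfu _ (smul_mem_coneSpan hx (div_nonneg hu.le hpos.le))
    rw [map_smul, smul_eq_mul, div_mul_cancel₀ _ hpos.ne'] at this
    exact lt_irrefl _ this
  have hs := dotProductEquiv_symm_dotProduct (f : (n → ℝ) →ₗ[ℝ] ℝ)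
  simp only [ContinuousLinearMap.coe_coe] at hs
  have := h _ fun i => by rw [dotProduct_comm, hs]; exact hf _ (mem_coneSpan_self g i)
  rw [dotProduct_comm, hs] at this
  linarith

theorem exists_nonneg_transpose_mulVec_eq (M : Matrix m n ℝ) {d : n → ℝ}
    (h : ∀ y, M *ᵥ y ≤ 0 → d ⬝ᵥ y ≤ 0) : ∃ l, 0 ≤ l ∧ Mᵀ *ᵥ l = d := by
  obtain ⟨l, hl, hld⟩ := mem_coneSpan_of_forall_dotProduct_nonpos (g := M) fun y hy => h y hy
  exact ⟨l, hl, by rw [mulVec_transpose, vecMul_eq_sum, hld]⟩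

theorem nonpos_of_forall_add_mul_le {a b x : ℝ} (h : ∀ s, 0 ≤ s → a + s * x ≤ b) : x ≤ 0 := by
  by_contra! hx
  have hab : a ≤ b := by simpa using h 0 le_rfl
  have := h ((b - a + 1) / x) (div_nonneg (by linarith) hx.le)
  rw [div_mul_cancel₀ _ hx.ne'] at this
  linarith

theorem optionElim'_dotProduct (a : ℝ) (u : n → ℝ) (y : Option n → ℝ) :
    Option.elim' a u ⬝ᵥ y = a * y none + u ⬝ᵥ (y ∘ some) := by
  simp [dotProduct, Fintype.sum_option]

/-- The affine form of Farkas' lemma (strong duality of linear programming), reduced to the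
homogeneous one by adjoining a coordinate. -/
theorem exists_nonneg_transpose_mulVec_eq_of_le (M : Matrix m n ℝ) (c : m → ℝ) (d : n → ℝ)
    (e : ℝ) (hfeas : ∃ y, M *ᵥ y ≤ c) (h : ∀ y, M *ᵥ y ≤ c → d ⬝ᵥ y ≤ e) :
    ∃ l, 0 ≤ l ∧ Mᵀ *ᵥ l = d ∧ l ⬝ᵥ c ≤ e := by
  obtain ⟨y₀, hy₀⟩ := hfeas
  let g : Option m → Option n → ℝ :=
    Option.elim' (Option.elim' (-1) 0) fun i => Option.elim' (-c i) (M i)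
  have hD : Option.elim' (-e) d ∈ coneSpan g := mem_coneSpan_of_forall_dotProduct_nonpos
    fun Y hY => by
      have ht : 0 ≤ Y none := by simpa [g, optionElim'_dotProduct] using hY none
      have hrow : ∀ i, (M *ᵥ (Y ∘ some)) i ≤ c i * Y none := fun i => by
        have := hY (some i)
        simp only [g, Option.elim'_some, optionElim'_dotProduct] at this
        simp only [mulVec]
        linarith
      rw [optionElim'_dotProduct]
      rcases ht.eq_or_lt with ht | ht
      · rw [← ht] at hrow ⊢
        have := nonpos_of_forall_add_mul_le fun s (hs : 0 ≤ s) => by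
          have := h (y₀ + s • (Y ∘ some)) fun i => by
            simpa [mulVec_add, mulVec_smul] using
              add_le_add (hy₀ i) (mul_nonpos_of_nonneg_of_nonpos hs (by simpa using hrow i))
          rwa [dotProduct_add, dotProduct_smul, smul_eq_mul] at this
        linarith
      · have := h ((Y none)⁻¹ • (Y ∘ some)) fun i => by
          rw [mulVec_smul, Pi.smul_apply, smul_eq_mul, inv_mul_le_iff₀ ht, mul_comm]
          exact hrow i
        rw [dotProduct_smul, smul_eq_mul, inv_mul_le_iff₀ ht] at this
        linarith
  obtain ⟨L, hL, hLD⟩ := hD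
  refine ⟨L ∘ some, fun i => hL _, ?_, ?_⟩
  · ext j
    simpa [g, mulVec_transpose, vecMul_eq_sum, Fintype.sum_option] using congrFun hLD (some j)
  · have hsum := congrFun hLD none
    have hnone : 0 ≤ L none := hL none
    simp [g, Fintype.sum_option] at hsum
    simp only [dotProduct, Function.comp_apply]
    linarith

end Farkas

section Hoffman

open Filter Topology

theorem isClosed_setOf_mulVec_le {m n : Type*} [Fintype n] (M : Matrix m n ℝ) (b : m → ℝ) :
    IsClosed {y | M *ᵥ y ≤ b} :=
  isClosed_le M.mulVecLin.continuous_of_finiteDimensional continuous_const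

theorem convex_setOf_mulVec_le {m n : Type*} [Fintype n] (M : Matrix m n ℝ) (b : m → ℝ) :
    Convex ℝ {y | M *ᵥ y ≤ b} := fun y hy w hw s t hs ht hst => by
  simp only [Set.mem_ofPred_eq, mulVec_add, mulVec_smul] at hy hw ⊢
  calc s • M *ᵥ y + t • M *ᵥ w ≤ s • b + t • b := by gcongr
    _ = b := by rw [← add_smul, hst, one_smul]

variable {m n : Type*} [Fintype m] [Fintype n]

theorem exists_dotProduct_sub_nonpos {P : Set (n → ℝ)} (hne : P.Nonempty) (hcl : IsClosed P)
    (hconv : Convex ℝ P) (x : n → ℝ) : ∃ y ∈ P, ∀ w ∈ P, (x - y) ⬝ᵥ (w - y) ≤ 0 := by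
  let e := EuclideanSpace.equiv n ℝ
  have hK : Convex ℝ (e ⁻¹' P) := hconv.linear_preimage e.toLinearMap
  obtain ⟨y, hy, hproj⟩ := exists_norm_eq_iInf_of_complete_convex
    (hne.preimage e.surjective) (hcl.preimage e.continuous).isComplete hK (e.symm x)
  refine ⟨e y, hy, fun w hw => ?_⟩
  have := (norm_eq_iInf_iff_real_inner_le_zero hK hy).1 hproj (e.symm w) (by simpa using hw)
  have he : ∀ a, e a = a.ofLp := fun _ => rfl
  have he' : ∀ a, (e.symm a).ofLp = a := fun _ => rfl
  simpa [EuclideanSpace.inner_eq_star_dotProduct, he, he', dotProduct_comm] using this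

theorem dotProduct_nonpos_of_forall_active (M : Matrix m n ℝ) {b : m → ℝ} {y h d : n → ℝ}
    (hy : M *ᵥ y ≤ b) (hnormal : ∀ w, M *ᵥ w ≤ b → h ⬝ᵥ (w - y) ≤ 0)
    (hd : ∀ i, (M *ᵥ y) i = b i → (M *ᵥ d) i ≤ 0) : h ⬝ᵥ d ≤ 0 := by
  have hev : ∀ᶠ t in 𝓝[>] (0 : ℝ), ∀ i, (M *ᵥ (y + t • d)) i ≤ b i := by
    refine eventually_all.2 fun i => ?_
    simp only [mulVec_add, mulVec_smul, Pi.add_apply, Pi.smul_apply, smul_eq_mul]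
    rcases (hy i).eq_or_lt with hi | hi
    · filter_upwards [self_mem_nhdsWithin] with t (ht : 0 < t)
      nlinarith [hd i hi]
    · have hc : Continuous fun t : ℝ => (M *ᵥ y) i + t * (M *ᵥ d) i := by fun_prop
      exact nhdsWithin_le_nhds (((hc.tendsto 0).eventually
        (gt_mem_nhds (by simpa using hi))).mono fun t ht => ht.le)
  obtain ⟨t, hfeas, ht⟩ := (hev.and self_mem_nhdsWithin).exists
  have := hnormal _ hfeas
  rw [add_sub_cancel_left, dotProduct_smul, smul_eq_mul] at this
  exact nonpos_of_mul_nonpos_right this ht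

/-- The normal cone of a polyhedron at `y` is spanned by the constraints active at `y`, and by
Carathéodory's theorem a linearly independent set of them suffices. -/
theorem exists_nonneg_active_of_normal (M : Matrix m n ℝ) {b : m → ℝ} {y h : n → ℝ}
    (hy : M *ᵥ y ≤ b) (hnormal : ∀ w, M *ᵥ w ≤ b → h ⬝ᵥ (w - y) ≤ 0) :
    ∃ μ : m → ℝ, 0 ≤ μ ∧ ∑ i, μ i • M i = h ∧ (∀ i, μ i ≠ 0 → (M *ᵥ y) i = b i) ∧
      LinearIndepOn ℝ M (Function.support μ) := by
  classical
  let active : m → Prop := fun i => (M *ᵥ y) i = b i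
  obtain ⟨l, hl, hlh⟩ := mem_coneSpan_of_forall_dotProduct_nonpos
    (g := fun i => if active i then M i else 0) fun d hd =>
      dotProduct_nonpos_of_forall_active M hy hnormal fun i hi => by
        have := hd i
        rwa [if_pos hi] at this
  let l' : m → ℝ := fun i => if active i then l i else 0
  have hl' : 0 ≤ l' := fun i => by
    simp only [l']
    split_ifs
    exacts [hl i, le_rfl]
  obtain ⟨μ, hμ, hμsum, hμsupp, hμind⟩ := exists_linearIndepOn_support M hl'
  refine ⟨μ, hμ, ?_, fun i hi => ?_, hμind⟩
  · rw [hμsum, ← hlh]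
    exact Finset.sum_congr rfl fun i _ => by by_cases hi : active i <;> simp [l', hi]
  · by_contra hna
    exact hμsupp hi (by simp [l', active, hna])

theorem norm_sq_le_dotProduct_self (x : n → ℝ) : ‖x‖ ^ 2 ≤ x ⬝ᵥ x := by
  have hx : 0 ≤ x ⬝ᵥ x := Finset.sum_nonneg fun i _ => mul_self_nonneg (x i)
  have : ‖x‖ ≤ √(x ⬝ᵥ x) := (pi_norm_le_iff_of_nonneg (Real.sqrt_nonneg _)).2 fun i =>
    Real.abs_le_sqrt (by
      simpa [sq, dotProduct] using
        Finset.single_le_sum (fun j _ => mul_self_nonneg (x j)) (Finset.mem_univ i))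
  simpa [Real.sq_sqrt hx] using pow_le_pow_left₀ (norm_nonneg x) this 2

/-- **Hoffman's lemma.** If `y` is the projection of `x` onto the polyhedron, `x - y` is a
nonnegative combination of linearly independent active rows, with coefficients of size
`O(‖x - y‖)`; pairing it with `x - y` gives `‖x - y‖² ≤ O(‖x - y‖ ε)`. -/
theorem exists_hoffman_bound (M : Matrix m n ℝ) :
    ∃ K, 0 ≤ K ∧ ∀ (b : m → ℝ) (x : n → ℝ) (ε : ℝ), 0 ≤ ε → (∃ y, M *ᵥ y ≤ b) →
      (∀ i, (M *ᵥ x) i ≤ b i + ε) → ∃ y, M *ᵥ y ≤ b ∧ ‖x - y‖ ≤ K * ε := by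
  obtain ⟨C, hC, hCbound⟩ := exists_norm_le_mul_norm_sum M
  refine ⟨Fintype.card m * C, by positivity, fun b x ε hε hfeas hx => ?_⟩
  obtain ⟨y, hy, hnormal⟩ := exists_dotProduct_sub_nonpos hfeas
    (isClosed_setOf_mulVec_le M b) (convex_setOf_mulVec_le M b) x
  obtain ⟨μ, hμ, hμsum, hμact, hμind⟩ := exists_nonneg_active_of_normal M hy hnormal
  refine ⟨y, hy, ?_⟩
  set h := x - y
  have hrow : ∀ i, μ i ≠ 0 → M i ⬝ᵥ h ≤ ε := fun i hi => by
    have : (M *ᵥ h) i ≤ ε := by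
      rw [mulVec_sub, Pi.sub_apply, hμact i hi]
      linarith [hx i]
    simpa [mulVec_apply, Matrix.row] using this
  have hviol : h ⬝ᵥ h ≤ (∑ i, μ i) * ε := by
    calc h ⬝ᵥ h = (∑ i, μ i • M i) ⬝ᵥ h := by rw [hμsum]
      _ = ∑ i, μ i * (M i ⬝ᵥ h) := by simp [sum_dotProduct, smul_dotProduct]
      _ ≤ ∑ i, μ i * ε := Finset.sum_le_sum fun i _ => by
        rcases eq_or_ne (μ i) 0 with hi | hi
        · simp [hi]
        · exact mul_le_mul_of_nonneg_left (hrow i hi) (hμ i)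
      _ = (∑ i, μ i) * ε := (Finset.sum_mul ..).symm
  have hcoeff : ∑ i, μ i ≤ Fintype.card m * (C * ‖h‖) := by
    calc ∑ i, μ i ≤ ∑ _i : m, ‖μ‖ := Finset.sum_le_sum fun i _ =>
          (le_abs_self _).trans (by simpa using norm_le_pi_norm μ i)
      _ = Fintype.card m * ‖μ‖ := by simp
      _ ≤ Fintype.card m * (C * ‖h‖) := by rw [← hμsum]; gcongr; exact hCbound μ hμind
  have hsq : ‖h‖ * ‖h‖ ≤ (Fintype.card m * C * ε) * ‖h‖ := by
    nlinarith [norm_sq_le_dotProduct_self h, norm_nonneg h]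
  rcases (norm_nonneg h).eq_or_lt with h0 | hpos
  · rw [← h0]; positivity
  · exact le_of_mul_le_mul_right hsq hpos

theorem exists_hoffman_bound_of_nonneg [DecidableEq n] (A : Matrix m n ℝ) :
    ∃ K, 0 ≤ K ∧ ∀ (c : m → ℝ) (l : n → ℝ), 0 ≤ l → (∃ l₀, 0 ≤ l₀ ∧ A *ᵥ l₀ = c) →
      ∃ l', 0 ≤ l' ∧ A *ᵥ l' = c ∧ ‖l - l'‖ ≤ K * ‖A *ᵥ l - c‖ := by
  let M : Matrix ((m ⊕ m) ⊕ n) n ℝ := fromRows (fromRows A (-A)) (-1)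
  have hM : ∀ c y, M *ᵥ y ≤ Sum.elim (Sum.elim c (-c)) (0 : n → ℝ) ↔ 0 ≤ y ∧ A *ᵥ y = c := by
    intro c y
    simp only [M, fromRows_mulVec, neg_mulVec, one_mulVec, Sum.elim_le_elim_iff, neg_le_neg_iff]
    rw [and_comm, le_antisymm_iff, neg_le, neg_zero]
  obtain ⟨K, hK, hbound⟩ := exists_hoffman_bound M
  refine ⟨K, hK, fun c l hl hfeas => ?_⟩
  have hviol : ∀ j, (M *ᵥ l) j ≤ Sum.elim (Sum.elim c (-c)) (0 : n → ℝ) j + ‖A *ᵥ l - c‖ := by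
    have hcoord := fun t => abs_le.1 (by simpa using norm_le_pi_norm (A *ᵥ l - c) t)
    rintro ((t | t) | i)
    · simp [M, fromRows_mulVec, neg_mulVec]
      linarith [(hcoord t).2]
    · simp [M, fromRows_mulVec, neg_mulVec]
      linarith [(hcoord t).1]
    · simp [M, fromRows_mulVec, neg_mulVec]
      linarith [show (0 : ℝ) ≤ l i from hl i, norm_nonneg (A *ᵥ l - c)]
  obtain ⟨l', hl', hdist⟩ := hbound _ l _ (norm_nonneg _)
    (hfeas.imp fun l₀ h => (hM c l₀).2 h) hviol
  exact ⟨l', (hM c l').1 hl' |>.1, (hM c l').1 hl' |>.2, hdist⟩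

end Hoffman

section PolyhedralSublinear

theorem IsPolyhedron.exists_eq_setOf_nonpos {E : Type*} [AddCommGroup E] [Module ℝ E] {S : Set E}
    (hS : IsPolyhedron S) (h0 : 0 ∈ S) (hcone : ∀ t : ℝ, 0 ≤ t → ∀ x ∈ S, t • x ∈ S) :
    ∃ (k : ℕ) (f : Fin k → E →ₗ[ℝ] ℝ), S = {x | ∀ i, f i x ≤ 0} := by
  obtain ⟨k, f, c, rfl⟩ := hS
  have hc : ∀ i, 0 ≤ c i := fun i => by simpa using h0 i
  refine ⟨k, f, Set.ext fun x => ⟨fun hx i => ?_, fun hx i => (hx i).trans (hc i)⟩⟩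
  by_contra! hpos
  have := hcone ((c i + 1) / f i x) (div_nonneg (by linarith [hc i]) hpos.le) x hx i
  rw [map_smul, smul_eq_mul, div_mul_cancel₀ _ hpos.ne'] at this
  linarith

variable {p q : ℕ} {Φ : (Fin p → ℝ) → Set (Fin q → ℝ)}

theorem exists_dotProduct_add_dotProduct (f : (Fin p → ℝ) × (Fin q → ℝ) →ₗ[ℝ] ℝ) :
    ∃ a b, ∀ u v, f (u, v) = a ⬝ᵥ u + b ⬝ᵥ v :=
  ⟨(dotProductEquiv ℝ _).symm (f.comp (LinearMap.inl ℝ _ _)),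
    (dotProductEquiv ℝ _).symm (f.comp (LinearMap.inr ℝ _ _)), fun u v => by
    rw [dotProductEquiv_symm_dotProduct, dotProductEquiv_symm_dotProduct, LinearMap.comp_apply,
      LinearMap.comp_apply, ← map_add, LinearMap.inl_apply, LinearMap.inr_apply, Prod.mk_add_mk,
      add_zero, zero_add]⟩

theorem IsPolyhedralMapping.exists_matrix (hpoly : IsPolyhedralMapping Φ)
    (hsub : IsSublinearMapping Φ) :
    ∃ (k : ℕ) (A : Matrix (Fin k) (Fin p) ℝ) (B : Matrix (Fin k) (Fin q) ℝ),
      ∀ u v, v ∈ Φ u ↔ A *ᵥ u + B *ᵥ v ≤ 0 := by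
  obtain ⟨k, f, hf⟩ := IsPolyhedron.exists_eq_setOf_nonpos hpoly hsub.1 hsub.2.2
  choose a b hab using fun i => exists_dotProduct_add_dotProduct (f i)
  refine ⟨k, a, b, fun u v => ?_⟩
  change (u, v) ∈ graphOf Φ ↔ _
  rw [hf]
  exact forall_congr' fun i => by rw [hab]; rfl

theorem IsSublinearMapping.add_mem (hsub : IsSublinearMapping Φ) {u u' : Fin p → ℝ}
    {v v' : Fin q → ℝ} (hv : v ∈ Φ u) (hv' : v' ∈ Φ u') : v + v' ∈ Φ (u + u') := by
  have hmid := hsub.2.1 (show (u, v) ∈ graphOf Φ from hv) (show (u', v') ∈ graphOf Φ from hv')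
    (by norm_num : (0 : ℝ) ≤ 1 / 2) (by norm_num : (0 : ℝ) ≤ 1 / 2) (by norm_num)
  have := hsub.2.2 2 zero_le_two _ hmid
  simp only [graphOf, smul_add, smul_smul, Set.mem_ofPred_eq] at this
  norm_num at this
  exact this

theorem smul_mem_upperAdjoint {w : Fin q → ℝ} {z : Fin p → ℝ} (hz : z ∈ upperAdjoint Φ w)
    {t : ℝ} (ht : 0 ≤ t) : t • z ∈ upperAdjoint Φ (t • w) := fun u v hv => by
  simpa only [smul_dotProduct, smul_eq_mul] using mul_le_mul_of_nonneg_left (hz u v hv) ht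

theorem isClosed_invOf_upperAdjoint (z : Fin p → ℝ) : IsClosed (invOf (upperAdjoint Φ) z) := by
  have : invOf (upperAdjoint Φ) z = ⋂ u, ⋂ v, ⋂ (_ : v ∈ Φ u), {w | z ⬝ᵥ u ≤ w ⬝ᵥ v} := by
    ext w
    simp [invOf, upperAdjoint]
  rw [this]
  exact isClosed_iInter fun u => isClosed_iInter fun v => isClosed_iInter fun _ =>
    isClosed_le continuous_const (continuous_id.dotProduct continuous_const)

variable {k : ℕ} {A : Matrix (Fin k) (Fin p) ℝ} {B : Matrix (Fin k) (Fin q) ℝ}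

theorem mem_upperAdjoint_iff (hΦ : ∀ u v, v ∈ Φ u ↔ A *ᵥ u + B *ᵥ v ≤ 0) {w : Fin q → ℝ}
    {z : Fin p → ℝ} : z ∈ upperAdjoint Φ w ↔ ∃ l, 0 ≤ l ∧ Aᵀ *ᵥ l = z ∧ Bᵀ *ᵥ l = -w := by
  constructor
  · intro hz
    obtain ⟨l, hl, hlz⟩ := exists_nonneg_transpose_mulVec_eq (fromCols A B)
      (d := Sum.elim z (-w)) fun Y hY => by
        rw [← Sum.elim_comp_inl_inr Y, sumElim_dotProduct_sumElim, neg_dotProduct]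
        rw [fromCols_mulVec] at hY
        linarith [hz _ _ ((hΦ _ _).2 hY)]
    rw [transpose_fromCols, fromRows_mulVec, Sum.elim_eq_iff] at hlz
    exact ⟨l, hl, hlz⟩
  · rintro ⟨l, hl, rfl, hlw⟩ u v hv
    have := dotProduct_nonneg_of_nonneg hl (neg_nonneg.2 ((hΦ u v).1 hv))
    rw [dotProduct_neg, dotProduct_add, dotProduct_mulVec, dotProduct_mulVec,
      ← mulVec_transpose, ← mulVec_transpose, hlw, neg_dotProduct] at this
    linarith

theorem eq_setOf_mulVec_le (hΦ : ∀ u v, v ∈ Φ u ↔ A *ᵥ u + B *ᵥ v ≤ 0) (x : Fin p → ℝ) :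
    Φ x = {y | B *ᵥ y ≤ -(A *ᵥ x)} :=
  Set.ext fun y => by rw [hΦ, Set.mem_ofPred_eq, le_neg_iff_add_nonpos_left]

theorem exists_mem_upperAdjoint_le_dotProduct (hΦ : ∀ u v, v ∈ Φ u ↔ A *ᵥ u + B *ᵥ v ≤ 0)
    {x : Fin p → ℝ} (hx : x ∈ domOf Φ) {w : Fin q → ℝ} {μ : ℝ} (hμ : ∀ y ∈ Φ x, μ ≤ w ⬝ᵥ y) :
    ∃ z ∈ upperAdjoint Φ w, μ ≤ z ⬝ᵥ x := by
  have hmem : ∀ y, y ∈ Φ x ↔ B *ᵥ y ≤ -(A *ᵥ x) := fun y => by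
    rw [eq_setOf_mulVec_le hΦ x, Set.mem_ofPred_eq]
  obtain ⟨y₀, hy₀⟩ := hx
  obtain ⟨l, hl, hlw, hle⟩ := exists_nonneg_transpose_mulVec_eq_of_le B (-(A *ᵥ x)) (-w) (-μ)
    ⟨y₀, (hmem y₀).1 hy₀⟩ fun y hy => by
      rw [neg_dotProduct, neg_le_neg_iff]
      exact hμ y ((hmem y).2 hy)
  refine ⟨Aᵀ *ᵥ l, (mem_upperAdjoint_iff hΦ).2 ⟨l, hl, rfl, hlw⟩, ?_⟩
  rw [mulVec_transpose, ← dotProduct_mulVec]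
  rw [dotProduct_neg, neg_le_neg_iff] at hle
  exact hle

end PolyhedralSublinear

section Main

variable {p q : ℕ} {νp : (Fin p → ℝ) → ℝ} {νq : (Fin q → ℝ) → ℝ}
  {Φ : (Fin p → ℝ) → Set (Fin q → ℝ)} {k : ℕ} {A : Matrix (Fin k) (Fin p) ℝ}
  {B : Matrix (Fin k) (Fin q) ℝ}

/-- The upper adjoint of a polyhedral mapping satisfies a Hoffman bound: this is Hoffman's lemma
for the system `Bᵀ *ᵥ l = -w`, `0 ≤ l` describing `Φ* w = Aᵀ *ᵥ {l | 0 ≤ l, Bᵀ *ᵥ l = -w}`. -/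
theorem exists_isHoffmanBound_upperAdjoint (hνp : IsNorm νp) (hνq : IsNorm νq)
    (hΦ : ∀ u v, v ∈ Φ u ↔ A *ᵥ u + B *ᵥ v ≤ 0) :
    ∃ C, 0 ≤ C ∧ IsHoffmanBound (dualNorm νq) (dualNorm νp) (upperAdjoint Φ) C := by
  obtain ⟨K, hK, hHoff⟩ := exists_hoffman_bound_of_nonneg Bᵀ
  obtain ⟨Ca, hCa, hCa'⟩ := hνp.dual.exists_mulVec_le Aᵀ
  obtain ⟨c, hc, hcq⟩ := hνq.dual.exists_norm_le_mul
  refine ⟨Ca * K * c, by positivity, fun w z hw hz => ?_⟩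
  obtain ⟨z₀, hz₀⟩ := hw
  obtain ⟨l₀, hl₀, -, hl₀w⟩ := (mem_upperAdjoint_iff hΦ).1 hz₀
  obtain ⟨w₁, hw₁⟩ := Set.mem_iUnion.1 hz
  refine le_mul_distWith ⟨w₁, hw₁⟩ (by positivity) fun w' hw' => ?_
  obtain ⟨l, hl, rfl, hlw'⟩ := (mem_upperAdjoint_iff hΦ).1 hw'
  obtain ⟨l', hl', hl'w, hdist⟩ := hHoff (-w) l hl ⟨l₀, hl₀, hl₀w⟩
  rw [hlw', sub_neg_eq_add, neg_add_eq_sub] at hdist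
  calc distWith (dualNorm νp) (Aᵀ *ᵥ l) (upperAdjoint Φ w)
      ≤ dualNorm νp (Aᵀ *ᵥ l - Aᵀ *ᵥ l') :=
        distWith_le hνp.dual ((mem_upperAdjoint_iff hΦ).2 ⟨l', hl', rfl, hl'w⟩)
    _ ≤ Ca * ‖l - l'‖ := by rw [← mulVec_sub]; exact hCa' _
    _ ≤ Ca * (K * (c * dualNorm νq (w - w'))) := by
        gcongr
        exact hdist.trans (mul_le_mul_of_nonneg_left (hcq _) hK)
    _ = Ca * K * c * dualNorm νq (w - w') := by ring

/-- If `z₀ ∈ Φ* w` maximizes `⟪·, x⟫` over `Φ* w`, then the pair `(w, 2 • z₀)` shows that the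
Hoffman constant of `Φ*` is at least `μ / ‖x‖`. -/
theorem div_le_hoffmanConst_upperAdjoint (hνp : IsNorm νp) (hνq : IsNorm νq) {C : ℝ}
    (hC : 0 ≤ C) (hbound : IsHoffmanBound (dualNorm νq) (dualNorm νp) (upperAdjoint Φ) C)
    {x : Fin p → ℝ} (hx : x ≠ 0) {w : Fin q → ℝ} (hw : dualNorm νq w ≤ 1) {z₀ : Fin p → ℝ}
    (hz₀ : z₀ ∈ upperAdjoint Φ w) {μ : ℝ} (hμ : 0 < μ) (hz₀x : μ ≤ z₀ ⬝ᵥ x)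
    (hmax : ∀ z ∈ upperAdjoint Φ w, z ⬝ᵥ x ≤ μ) :
    μ / νp x ≤ hoffmanConst (dualNorm νq) (dualNorm νp) (upperAdjoint Φ) := by
  have h2 : (2 : ℝ) • z₀ ∈ upperAdjoint Φ ((2 : ℝ) • w) := smul_mem_upperAdjoint hz₀ zero_le_two
  have hnot : (2 : ℝ) • z₀ ∉ upperAdjoint Φ w := fun h => by
    have := hmax _ h
    rw [smul_dotProduct, smul_eq_mul] at this
    linarith
  have hnum : μ / νp x ≤ distWith (dualNorm νp) ((2 : ℝ) • z₀) (upperAdjoint Φ w) :=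
    le_distWith ⟨z₀, hz₀⟩ fun z hz => by
      rw [div_le_iff₀ (hνp.pos hx)]
      refine le_trans ?_ (hνp.dotProduct_le_dualNorm_mul _ _)
      rw [sub_dotProduct, smul_dotProduct, smul_eq_mul]
      linarith [hmax z hz]
  have hden : distWith (dualNorm νq) w (invOf (upperAdjoint Φ) ((2 : ℝ) • z₀)) ≤ 1 := by
    refine (distWith_le hνq.dual h2).trans ?_
    rwa [show w - (2 : ℝ) • w = -w by module, hνq.dual.map_neg]
  have hden_pos := distWith_pos hνq.dual (isClosed_invOf_upperAdjoint _) ⟨_, h2⟩ hnot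
  exact (hnum.trans (le_div_self (distWith_nonneg hνp.dual _ _) hden_pos hden)).trans
    (div_le_hoffmanConst hνq.dual hC hbound ⟨z₀, hz₀⟩ (Set.mem_iUnion.2 ⟨_, h2⟩) hnot)

/-- The norm of `Φ` is at most the Hoffman constant of `Φ*`. -/
theorem le_hoffmanConst_upperAdjoint_mul (hνp : IsNorm νp) (hνq : IsNorm νq)
    (hsub : IsSublinearMapping Φ) (hΦ : ∀ u v, v ∈ Φ u ↔ A *ᵥ u + B *ᵥ v ≤ 0)
    {x : Fin p → ℝ} (hx : x ∈ domOf Φ) {γ : ℝ} (hγ : 0 < γ) (hγx : ∀ y ∈ Φ x, γ ≤ νq y) :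
    γ ≤ hoffmanConst (dualNorm νq) (dualNorm νp) (upperAdjoint Φ) * νp x := by
  have hx0 : x ≠ 0 := by
    rintro rfl
    have := hγx 0 hsub.1
    rw [hνq.map_zero] at this
    linarith
  obtain ⟨C, hC, hbound⟩ := exists_isHoffmanBound_upperAdjoint hνp hνq hΦ
  obtain ⟨w, hw, hwγ⟩ := hνq.exists_dualNorm_le_one
    (eq_setOf_mulVec_le hΦ x ▸ convex_setOf_mulVec_le B _) hγ hγx
  set μ := sInf ((w ⬝ᵥ ·) '' Φ x)
  have hne : ((w ⬝ᵥ ·) '' Φ x).Nonempty := hx.image _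
  have hγμ : γ ≤ μ := le_csInf hne (by rintro _ ⟨y, hy, rfl⟩; exact hwγ y hy)
  have hbdd : BddBelow ((w ⬝ᵥ ·) '' Φ x) := ⟨γ, by rintro _ ⟨y, hy, rfl⟩; exact hwγ y hy⟩
  obtain ⟨z₀, hz₀, hz₀x⟩ := exists_mem_upperAdjoint_le_dotProduct hΦ hx (μ := μ)
    fun y hy => csInf_le hbdd ⟨y, hy, rfl⟩
  have hmax : ∀ z ∈ upperAdjoint Φ w, z ⬝ᵥ x ≤ μ := fun z hz =>
    le_csInf hne (by rintro _ ⟨y, hy, rfl⟩; exact hz x y hy)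
  have := div_le_hoffmanConst_upperAdjoint hνp hνq hC hbound hx0 hw hz₀ (hγ.trans_le hγμ) hz₀x hmax
  rw [div_le_iff₀ (hνp.pos hx0)] at this
  exact hγμ.trans this

theorem isHoffmanBound_hoffmanConst_upperAdjoint (hνp : IsNorm νp) (hνq : IsNorm νq)
    (hpoly : IsPolyhedralMapping Φ) (hsub : IsSublinearMapping Φ)
    (hdom : IsLinearSubspace (domOf Φ)) :
    IsHoffmanBound νp νq Φ (hoffmanConst (dualNorm νq) (dualNorm νp) (upperAdjoint Φ)) := by
  obtain ⟨k, A, B, hΦ⟩ := hpoly.exists_matrix hsub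
  have hH := hoffmanConst_nonneg (Φ := upperAdjoint Φ) hνq.dual hνp.dual
  intro u v hu hv
  obtain ⟨u₀, hu₀⟩ := Set.mem_iUnion.1 hv
  refine le_mul_distWith ⟨u₀, hu₀⟩ hH fun u' hu' => ?_
  have hdom' : u - u' ∈ domOf Φ := by
    obtain ⟨W, hW⟩ := hdom
    have hu'dom : u' ∈ domOf Φ := ⟨v, hu'⟩
    rw [hW] at hu hu'dom ⊢
    exact W.sub_mem hu hu'dom
  rcases (distWith_nonneg hνq v (Φ u)).eq_or_lt with h0 | hpos
  · rw [← h0]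
    exact mul_nonneg hH (hνp.nonneg _)
  refine le_hoffmanConst_upperAdjoint_mul hνp hνq hsub hΦ hdom' hpos fun y hy => ?_
  have := hsub.add_mem hu' hy
  rw [add_sub_cancel] at this
  simpa [hνq.map_neg] using distWith_le hνq (x := v) this

end Main

/-- If `dom(Φ)` is a linear subspace, then `H(Φ) ≤ H(Φ*)`. -/
theorem stmt4 {p q : ℕ} (νp : (Fin p → ℝ) → ℝ) (νq : (Fin q → ℝ) → ℝ)
    (hνp : IsNorm νp) (hνq : IsNorm νq)
    (Φ : (Fin p → ℝ) → Set (Fin q → ℝ)) (hpoly : IsPolyhedralMapping Φ)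
    (hsub : IsSublinearMapping Φ) (hdom : IsLinearSubspace (domOf Φ)) :
    hoffmanConst νp νq Φ ≤ hoffmanConst (dualNorm νq) (dualNorm νp) (upperAdjoint Φ) :=
  hoffmanConst_le hνp (hoffmanConst_nonneg hνq.dual hνp.dual)
    (isHoffmanBound_hoffmanConst_upperAdjoint hνp hνq hpoly hsub hdom)
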